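/- For every MV-algebra A, the diagonalization D(A) = (A × A, τ_A), with τ_A(a,b) = (a,a), is an SMMV-algebra, and for every SMMV-algebra (A, τ) the map Φ: a ↦ (τ(a), a) is an embedding of (A, τ) into D(A). -/

import Mathlib

/-- An MV-algebra `(A, ⊕, ¬, 0)`. -/
class MV (A : Type*) extends Zero A where
  oplus : A → A → A
  mvneg : A → A
  oplus_assoc : ∀ x y z : A, oplus (oplus x y) z = oplus x (oplus y z)
  oplus_comm : ∀ x y : A, oplus x y = oplus y x
  oplus_zero : ∀ x : A, oplus x 0 = x
  mvneg_mvneg : ∀ x : A, mvneg (mvneg x) = x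
  oplus_top : ∀ x : A, oplus x (mvneg 0) = mvneg 0
  luk : ∀ x y : A, oplus (mvneg (oplus (mvneg x) y)) y = oplus (mvneg (oplus (mvneg y) x)) x

namespace MV

variable {A : Type*} [MV A]

/-- The top element `1 = ¬0`. -/
def top : A := mvneg 0
/-- `x → y := ¬x ⊕ y`. -/
def imp (x y : A) : A := oplus (mvneg x) y
/-- `x ⊙ y := ¬(¬x ⊕ ¬y)`. -/
def odot (x y : A) : A := mvneg (oplus (mvneg x) (mvneg y))
/-- `x ⊖ y := ¬(¬x ⊕ y)`. -/
def ominus (x y : A) : A := mvneg (oplus (mvneg x) y)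
/-- Lattice join `x ∨ y := (x → y) → y`. -/
def mvsup (x y : A) : A := imp (imp x y) y
/-- Lattice meet `x ∧ y := x ⊙ (x → y)`. -/
def mvinf (x y : A) : A := odot x (imp x y)
/-- The lattice order: `x ≤ y` iff `x → y = 1`. -/
def mvle (x y : A) : Prop := imp x y = top
/-- Strict order. -/
def mvlt (x y : A) : Prop := mvle x y ∧ x ≠ y

/-- `(A, τ)` is an SMV-algebra. -/
structure IsSMV (τ : A → A) : Prop where
  map_top : τ top = top
  tau_oplus : ∀ x y : A, τ (oplus x y) = oplus (τ x) (τ (ominus y (odot x y)))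
  map_neg : ∀ x : A, τ (mvneg x) = mvneg (τ x)
  tau_fix : ∀ x y : A, τ (oplus (τ x) (τ y)) = oplus (τ x) (τ y)

/-- `(A, τ)` is a state morphism MV-algebra. -/
def IsSMMV (τ : A → A) : Prop := IsSMV τ ∧ ∀ x y : A, τ (oplus x y) = oplus (τ x) (τ y)

/-- An MV-filter. -/
structure IsFilter (F : Set A) : Prop where
  top_mem : top ∈ F
  mp : ∀ a b : A, a ∈ F → imp a b ∈ F → b ∈ F

/-- A `τ`-filter: an MV-filter closed under `τ`. -/
def IsTauFilter (τ : A → A) (F : Set A) : Prop := IsFilter F ∧ ∀ a ∈ F, τ a ∈ F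

/-- Subdirect irreducibility of an SMV-algebra: there is a minimum nontrivial `τ`-filter. -/
def SubdirIrrSMV (τ : A → A) : Prop :=
  ∃ F : Set A, IsTauFilter τ F ∧ F ≠ {top} ∧
    ∀ G : Set A, IsTauFilter τ G → G ≠ {top} → F ⊆ G

/-- A filter of the subalgebra/subhoop with universe `S`. -/
def IsFilterOn (S F : Set A) : Prop :=
  F ⊆ S ∧ top ∈ F ∧ ∀ a b : A, a ∈ F → b ∈ S → imp a b ∈ F → b ∈ F

/-- Subdirect irreducibility of the subalgebra/subhoop with universe `S`:
there is a minimum nontrivial filter on `S`. -/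
def SubdirIrrOn (S : Set A) : Prop :=
  ∃ F : Set A, IsFilterOn S F ∧ F ≠ {top} ∧
    ∀ G : Set A, IsFilterOn S G → G ≠ {top} → F ⊆ G

/-- The set `F_τ(A) = {a : τ a = 1}`. -/
def tauKernel (τ : A → A) : Set A := {a : A | τ a = top}

/-- Homomorphisms of MV-algebras. -/
structure IsMVHom {A B : Type*} [MV A] [MV B] (f : A → B) : Prop where
  map_oplus : ∀ x y : A, f (oplus x y) = oplus (f x) (f y)
  map_neg : ∀ x : A, f (mvneg x) = mvneg (f x)
  map_zero : f 0 = 0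

end MV

open MV

instance MV.instProd {A B : Type*} [MV A] [MV B] : MV (A × B) where
  oplus x y := (oplus x.1 y.1, oplus x.2 y.2)
  mvneg x := (mvneg x.1, mvneg x.2)
  oplus_assoc x y z := by simp [oplus_assoc]
  oplus_comm x y := by simp [oplus_comm x.1 y.1, oplus_comm x.2 y.2]
  oplus_zero x := by simp [oplus_zero]
  mvneg_mvneg x := by simp [mvneg_mvneg]
  oplus_top x := by simp [oplus_top]
  luk x y := by simp [luk]

instance MV.instPi {I : Type*} {A : I → Type*} [∀ i, MV (A i)] : MV (∀ i, A i) where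
  oplus x y i := oplus (x i) (y i)
  mvneg x i := mvneg (x i)
  oplus_assoc x y z := by funext i; simp [oplus_assoc]
  oplus_comm x y := by funext i; exact oplus_comm _ _
  oplus_zero x := by funext i; exact oplus_zero _
  mvneg_mvneg x := by funext i; exact mvneg_mvneg _
  oplus_top x := by funext i; exact oplus_top _
  luk x y := by funext i; exact luk _ _

/-- The diagonal operator of `D(A) = (A × A, τ_A)`, `τ_A (a,b) = (a,a)`. -/
def DTau {X : Type*} (p : X × X) : X × X := (p.1, p.1)

/-!
An SMMV-algebra is the same thing as an MV-algebra with an idempotent MV-endomorphism: the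
remaining SMV axiom `τ (x ⊕ y) = τ x ⊕ τ (y ⊖ (x ⊙ y))` follows from additivity of `τ` through the
identity `x ⊕ (y ⊖ (x ⊙ y)) = x ⊕ y`. The diagonal `τ_A` is such an endomorphism of `A × A`, and
`Φ = (τ, id)` is a homomorphism, injective by its second coordinate, which intertwines `τ` and
`τ_A` because `τ` is idempotent.
-/

namespace MV

variable {A : Type*} [MV A]

lemma neg_top : (mvneg top : A) = 0 := mvneg_mvneg 0

lemma zero_oplus (x : A) : oplus 0 x = x := by
  rw [oplus_comm, oplus_zero]

lemma top_oplus (x : A) : oplus (top : A) x = top := by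
  rw [oplus_comm]; exact oplus_top x

lemma neg_oplus_self (x : A) : oplus (mvneg x) x = top := by
  have h := luk x (top : A)
  simp only [top, oplus_top, mvneg_mvneg, zero_oplus] at h ⊢
  exact h.symm

lemma ominus_odot (x y : A) :
    ominus y (odot x y) = mvneg (oplus (mvneg (oplus x y)) x) := by
  have h := luk (mvneg y) x
  rw [mvneg_mvneg] at h
  unfold ominus odot
  rw [oplus_comm (mvneg y) (mvneg (oplus (mvneg x) (mvneg y))), ← h, oplus_comm y x]

lemma oplus_ominus_odot (x y : A) : oplus x (ominus y (odot x y)) = oplus x y := by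
  have h := luk (oplus x y) x
  rw [show oplus (mvneg x) (oplus x y) = top by rw [← oplus_assoc, neg_oplus_self, top_oplus],
    neg_top, zero_oplus] at h
  rw [ominus_odot, oplus_comm]
  exact h

lemma IsMVHom.id : IsMVHom (fun a : A => a) :=
  ⟨fun _ _ => rfl, fun _ => rfl, rfl⟩

lemma IsMVHom.prodMk {B C : Type*} [MV B] [MV C] {f : A → B} {g : A → C}
    (hf : IsMVHom f) (hg : IsMVHom g) : IsMVHom (fun a => (f a, g a)) :=
  ⟨fun x y => Prod.ext (hf.map_oplus x y) (hg.map_oplus x y),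
    fun x => Prod.ext (hf.map_neg x) (hg.map_neg x), Prod.ext hf.map_zero hg.map_zero⟩

lemma isMVHom_dTau : IsMVHom (DTau : A × A → A × A) :=
  ⟨fun _ _ => rfl, fun _ => rfl, rfl⟩

lemma isSMMV_of_isMVHom_of_map_map {τ : A → A} (hτ : IsMVHom τ) (hidem : ∀ x, τ (τ x) = τ x) :
    IsSMMV τ := by
  refine ⟨⟨?_, fun x y => ?_, hτ.map_neg, fun x y => ?_⟩, hτ.map_oplus⟩
  · rw [top, hτ.map_neg, hτ.map_zero]
  · rw [← hτ.map_oplus, oplus_ominus_odot]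
  · rw [hτ.map_oplus, hidem, hidem]

lemma IsSMV.map_zero {τ : A → A} (hτ : IsSMV τ) : τ 0 = 0 := by
  rw [← neg_top, hτ.map_neg, hτ.map_top]

lemma IsSMV.map_map {τ : A → A} (hτ : IsSMV τ) (x : A) : τ (τ x) = τ x := by
  simpa only [hτ.map_zero, oplus_zero] using hτ.tau_fix x 0

lemma IsSMMV.isMVHom {τ : A → A} (hτ : IsSMMV τ) : IsMVHom τ :=
  ⟨hτ.2, hτ.1.map_neg, hτ.1.map_zero⟩

end MV

/-- `D(A)` is an SMMV-algebra, and for every SMMV-algebra `(A, τ)`,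
the map `Φ : a ↦ (τ a, a)` is an embedding of `(A, τ)` into `D(A)`. -/
theorem diagonalization_embedding {A : Type*} [MV A] :
    IsSMMV (DTau : A × A → A × A) ∧
    ∀ τ : A → A, IsSMMV τ →
      (Function.Injective (fun a : A => ((τ a, a) : A × A)) ∧
       IsMVHom (fun a : A => ((τ a, a) : A × A)) ∧
       ∀ a : A, ((τ (τ a), τ a) : A × A) = DTau ((τ a, a) : A × A)) :=
  ⟨isSMMV_of_isMVHom_of_map_map isMVHom_dTau fun _ => rfl, fun _ hτ =>
    ⟨fun _ _ h => congrArg Prod.snd h, hτ.isMVHom.prodMk IsMVHom.id,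
      fun a => Prod.ext (hτ.1.map_map a) rfl⟩⟩
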